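/- Suppose β ≥ 3, p ≥ β, and consider the Besov-type condition with spatial regularity exponent α. Via Hölder interpolation in time and Besov interpolation in space between L^β B^α_{p,∞}, L^2 H^1, and L^∞ L^2, the minimal α for which L^β B^α_{p,∞} ∩ L^2 H^1 ∩ L^∞ L^2 embeds into L^3 B^{1/3}_{3,∞} is α = 2/β + 2/p − 1. More precisely: solving (1/3) = x/β + y/2, 1/p' = x/p + (1−x)/2, α' = xα + y, subject to α' ≥ 3(1/p' − 1/3) + 1/3, 0 ≤ x, y, x + y ≤ 1, the minimal admissible α equals (3/p + 2/β − 3/2) + 1/(6x*) where x* = max over admissible x, and when β ≥ 3 and p ≥ β this minimum equals 2/β + 2/p − 1. -/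

import Mathlib

/-!
Eliminating `y` through the time constraint, the embedding condition reads
`α ≥ 3/p + 2/β - 3/2 + 1/(6x)`, which decreases in `x`. The spatial constraint caps `x` at
`x* = p / (3(p - 2))`, where `1/(6x*) = 1/2 - 1/p`, giving the bound `2/β + 2/p - 1`; for
`3 ≤ β ≤ p` the point `x*` also satisfies `y ≥ 0` and `x + y ≤ 1`, so the bound is attained.
-/

namespace BesovInterpolation

theorem embedding_condition_iff {β p x y α : ℝ} (hx : 0 < x) (htime : 1/3 = x/β + y/2) :
    3 * (x/p + (1-x)/2 - 1/3) + 1/3 ≤ x*α + y ↔ 3/p + 2/β - 3/2 + 1/(6*x) ≤ α := by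
  have hy : y = 2/3 - 2 * (x/β) := by linarith
  have hsplit : 3/p + 2/β - 3/2 + 1/(6*x) = (3 * (x/p) + 2 * (x/β) - 3/2 * x + 1/6) / x := by
    field_simp
  rw [hsplit, div_le_iff₀ hx, hy]
  constructor <;> intro h <;> linarith

theorem half_sub_inv_le_of_spatial {p x : ℝ} (hx : 0 < x) (hspace : 1/3 ≤ x/p + (1-x)/2) :
    1/2 - 1/p ≤ 1/(6*x) := by
  rw [le_div_iff₀ (by positivity)]
  have : (1/2 - 1/p) * (6*x) = 3*x - 6 * (x/p) := by ring
  linarith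

/-- The largest `x` allowed by the spatial constraint when `p > 2`. -/
noncomputable def criticalX (p : ℝ) : ℝ := p / (3 * (p - 2))

theorem criticalX_pos {p : ℝ} (hp : 2 < p) : 0 < criticalX p := by
  unfold criticalX
  have : 0 < p - 2 := by linarith
  positivity

theorem spatial_eq_criticalX {p : ℝ} (hp : 2 < p) :
    1/3 = criticalX p / p + (1 - criticalX p)/2 := by
  have : p - 2 ≠ 0 := by linarith
  unfold criticalX
  field_simp
  ring

theorem one_div_six_mul_criticalX {p : ℝ} (hp : 2 < p) : 1/(6 * criticalX p) = 1/2 - 1/p := by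
  have : p - 2 ≠ 0 := by linarith
  unfold criticalX
  field_simp
  ring

theorem criticalX_le_div_three {β p : ℝ} (hβ : 3 ≤ β) (hp : β ≤ p) : criticalX p ≤ β / 3 := by
  unfold criticalX
  rw [div_le_div_iff₀ (by nlinarith) (by norm_num)]
  nlinarith

theorem criticalX_mul_one_sub_le {β p : ℝ} (hβ : 2 < β) (hp : β ≤ p) :
    criticalX p * (1 - 2/β) ≤ 1/3 := by
  have hβ0 : 0 < β := by linarith
  have hp2 : 0 < p - 2 := by linarith
  have : criticalX p * (1 - 2/β) = p * (β - 2) / (3 * (p - 2) * β) := by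
    unfold criticalX
    field_simp
  rw [this, div_le_iff₀ (by positivity)]
  nlinarith

end BesovInterpolation

open BesovInterpolation in
theorem stmt10 (β p : ℝ) (hβ : 3 ≤ β) (hp : β ≤ p) :
    IsLeast {α : ℝ | ∃ x y : ℝ, 0 < x ∧ 0 ≤ y ∧ x + y ≤ 1 ∧
        1/3 = x/β + y/2 ∧
        1/3 ≤ x/p + (1-x)/2 ∧
        3 * (x/p + (1-x)/2 - 1/3) + 1/3 ≤ x*α + y}
      (2/β + 2/p - 1) := by
  constructor
  · have hp2 : 2 < p := by linarith
    set x := criticalX p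
    have htime : 1/3 = x/β + (2/3 - 2*x/β)/2 := by ring
    refine ⟨x, 2/3 - 2*x/β, criticalX_pos hp2, ?_, ?_, htime, (spatial_eq_criticalX hp2).le, ?_⟩
    · have := criticalX_le_div_three hβ hp
      rw [sub_nonneg, div_le_iff₀ (by positivity)]
      linarith
    · have := criticalX_mul_one_sub_le (by linarith) hp
      linarith [show x * (1 - 2/β) = x - 2*x/β by ring]
    · rw [embedding_condition_iff (criticalX_pos hp2) htime, one_div_six_mul_criticalX hp2]
      linarith [show 3/p - 1/p = 2/p by ring]
  · rintro α ⟨x, y, hx, -, -, htime, hspace, hembed⟩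
    rw [embedding_condition_iff hx htime] at hembed
    linarith [half_sub_inv_le_of_spatial hx hspace, show 3/p - 1/p = 2/p by ring]
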